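/- For all real numbers a, b, μ and σ > 0, ∫_ℝ (1/(√(2π)σ)) e^{−(x−μ)²/(2σ²)} erf(ax + b) dx = erf((aμ + b)/√(1 + 2a²σ²)). -/

import Mathlib

/-!
Both sides are functions of `b` with the same derivative: differentiating under the integral
sign turns the left side into `2/√π` times the integral of a Gaussian density against
`exp (-(a x + b)²)`, which is again a Gaussian integral and equals the derivative of the right
side. At `b = -a μ` both sides vanish, the right side because `erf 0 = 0`, the left side because
`erf` is odd and the density is symmetric about `μ`.
-/

/-- The error function `erf(x) = (2/√π) ∫₀^x e^{-t²} dt`. -/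
noncomputable def erf (x : ℝ) : ℝ := (2 / Real.sqrt Real.pi) * ∫ t in (0:ℝ)..x, Real.exp (-t ^ 2)

open Real MeasureTheory

lemma integrable_exp_neg_sq : Integrable fun t : ℝ => exp (-t ^ 2) := by
  simpa using integrable_exp_neg_mul_sq one_pos

lemma hasDerivAt_erf (x : ℝ) : HasDerivAt erf (2 / √π * exp (-x ^ 2)) x := by
  have h_cont : Continuous fun t : ℝ => exp (-t ^ 2) := by fun_prop
  exact (intervalIntegral.integral_hasDerivAt_right integrable_exp_neg_sq.intervalIntegrable
    (h_cont.stronglyMeasurableAtFilter _ _) h_cont.continuousAt).const_mul _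

lemma HasDerivAt.erf {f : ℝ → ℝ} {f' x : ℝ} (hf : HasDerivAt f f' x) :
    HasDerivAt (fun x => erf (f x)) (2 / √π * Real.exp (-f x ^ 2) * f') x :=
  (hasDerivAt_erf (f x)).comp x hf

lemma continuous_erf : Continuous erf :=
  continuous_iff_continuousAt.2 fun x => (hasDerivAt_erf x).continuousAt

lemma erf_zero : erf 0 = 0 := by
  simp [erf]

lemma erf_neg (x : ℝ) : erf (-x) = -erf x := by
  have h := intervalIntegral.integral_comp_neg (a := x) (b := 0) fun t => exp (-t ^ 2)
  simp only [neg_zero, even_two, Even.neg_pow] at h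
  rw [erf, erf, ← h, intervalIntegral.integral_symm]
  ring

lemma abs_erf_le_two (x : ℝ) : |erf x| ≤ 2 := by
  have hπ : 0 < √π := sqrt_pos.2 pi_pos
  have h : ‖∫ t in (0 : ℝ)..x, exp (-t ^ 2)‖ ≤ √π :=
    calc ‖∫ t in (0 : ℝ)..x, exp (-t ^ 2)‖
        ≤ ∫ t in Set.uIoc 0 x, ‖exp (-t ^ 2)‖ :=
          intervalIntegral.norm_integral_le_integral_norm_uIoc
      _ ≤ ∫ t, ‖exp (-t ^ 2)‖ :=
          setIntegral_le_integral integrable_exp_neg_sq.norm (.of_forall fun _ => norm_nonneg _)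
      _ = √π := by simpa using integral_gaussian 1
  rw [erf, abs_mul, abs_of_pos (by positivity), ← norm_eq_abs]
  calc 2 / √π * ‖∫ t in (0 : ℝ)..x, exp (-t ^ 2)‖ ≤ 2 / √π * √π := by gcongr
    _ = 2 := by field_simp

lemma integral_exp_neg_quadratic {A : ℝ} (hA : 0 < A) (B C : ℝ) :
    ∫ x : ℝ, exp (-(A * x ^ 2 + B * x + C)) = √(π / A) * exp (B ^ 2 / (4 * A) - C) :=
  calc ∫ x : ℝ, exp (-(A * x ^ 2 + B * x + C))
      = ∫ x : ℝ, exp (-A * (x + B / (2 * A)) ^ 2) * exp (B ^ 2 / (4 * A) - C) := by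
        congr 1 with x
        rw [← exp_add]
        congr 1
        field_simp
        ring
    _ = (∫ x : ℝ, exp (-A * x ^ 2)) * exp (B ^ 2 / (4 * A) - C) := by
        rw [integral_mul_const, integral_add_right_eq_self fun x => exp (-A * x ^ 2)]
    _ = √(π / A) * exp (B ^ 2 / (4 * A) - C) := by rw [integral_gaussian]

lemma integrable_gaussian_density (μ : ℝ) {σ : ℝ} (hσ : σ ≠ 0) :
    Integrable fun x : ℝ => 1 / (√(2 * π) * σ) * exp (-(x - μ) ^ 2 / (2 * σ ^ 2)) := by
  have h := (integrable_exp_neg_mul_sq (b := 1 / (2 * σ ^ 2)) (by positivity)).comp_sub_right μ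
  refine (h.const_mul (1 / (√(2 * π) * σ))).congr (.of_forall fun x => ?_)
  simp only
  ring_nf

lemma integral_gaussian_density_mul_exp_neg_sq (a b μ : ℝ) {σ : ℝ} (hσ : 0 < σ) :
    ∫ x : ℝ, 1 / (√(2 * π) * σ) * exp (-(x - μ) ^ 2 / (2 * σ ^ 2)) *
        exp (-(a * x + b) ^ 2) =
      exp (-((a * μ + b) / √(1 + 2 * a ^ 2 * σ ^ 2)) ^ 2) / √(1 + 2 * a ^ 2 * σ ^ 2) := by
  set K := 1 + 2 * a ^ 2 * σ ^ 2 with hK_def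
  have hK : 0 < K := by positivity
  set A := 1 / (2 * σ ^ 2) + a ^ 2 with hA_def
  have hA : 0 < A := by positivity
  set B := -μ / σ ^ 2 + 2 * a * b with hB_def
  set C := μ ^ 2 / (2 * σ ^ 2) + b ^ 2 with hC_def
  have h_exponent (x : ℝ) :
      -(x - μ) ^ 2 / (2 * σ ^ 2) + -(a * x + b) ^ 2 = -(A * x ^ 2 + B * x + C) := by
    rw [hA_def, hB_def, hC_def]
    field_simp
    ring
  have h_sqrt : √(π / A) = √(2 * π) * σ / √K := by
    rw [show π / A = 2 * π * σ ^ 2 / K by rw [hA_def, hK_def]; field_simp,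
      sqrt_div (by positivity), sqrt_mul (by positivity), sqrt_sq hσ.le]
  have h_completed : B ^ 2 / (4 * A) - C = -((a * μ + b) / √K) ^ 2 := by
    rw [div_pow, sq_sqrt hK.le, hA_def, hB_def, hC_def, hK_def]
    field_simp
    ring
  simp_rw [mul_assoc, ← exp_add, h_exponent]
  rw [integral_const_mul, integral_exp_neg_quadratic hA, h_sqrt, h_completed]
  have : √(2 * π) ≠ 0 := by positivity
  field_simp

lemma hasDerivAt_integral_mul_erf {g : ℝ → ℝ} (hg : Integrable g) (a c : ℝ) :
    HasDerivAt (fun c => ∫ x, g x * erf (a * x + c))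
      (2 / √π * ∫ x, g x * exp (-(a * x + c) ^ 2)) c := by
  have h_meas (c : ℝ) : AEStronglyMeasurable (fun x => erf (a * x + c)) :=
    (continuous_erf.comp (by fun_prop)).aestronglyMeasurable
  have h_meas' : AEStronglyMeasurable fun x => 2 / √π * (g x * exp (-(a * x + c) ^ 2)) :=
    (hg.aestronglyMeasurable.mul
      (by fun_prop : Continuous fun x => exp (-(a * x + c) ^ 2)).aestronglyMeasurable).const_mul _
  rw [← integral_const_mul]
  refine (hasDerivAt_integral_of_dominated_loc_of_deriv_le
    (F := fun c x => g x * erf (a * x + c))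
    (F' := fun c x => 2 / √π * (g x * exp (-(a * x + c) ^ 2)))
    (bound := fun x => 2 / √π * ‖g x‖)
    Filter.univ_mem (.of_forall fun c => hg.aestronglyMeasurable.mul (h_meas c))
    (hg.mul_bdd (h_meas c) (.of_forall fun x => abs_erf_le_two _)) h_meas'
    (.of_forall fun x c _ => ?_) (hg.norm.const_mul _) (.of_forall fun x c _ => ?_)).2
  · rw [norm_mul, norm_mul, norm_of_nonneg (by positivity : 0 ≤ 2 / √π),
      norm_of_nonneg (exp_pos _).le]
    gcongr
    exact mul_le_of_le_one_right (norm_nonneg _) (exp_le_one_iff.2 (neg_nonpos.2 (sq_nonneg _)))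
  · exact ((HasDerivAt.erf ((hasDerivAt_id' c).const_add (a * x))).const_mul (g x)).congr_deriv
      (by ring)

lemma integral_mul_erf_eq_zero_of_symmetric {g : ℝ → ℝ} {μ : ℝ}
    (hg : ∀ x, g (2 * μ - x) = g x) (a : ℝ) : ∫ x, g x * erf (a * (x - μ)) = 0 := by
  have h_odd (x : ℝ) :
      g (2 * μ - x) * erf (a * (2 * μ - x - μ)) = -(g x * erf (a * (x - μ))) := by
    rw [hg, show a * (2 * μ - x - μ) = -(a * (x - μ)) by ring, erf_neg, mul_neg]
  have h := integral_sub_left_eq_self (fun x => g x * erf (a * (x - μ))) volume (2 * μ)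
  simp only [h_odd, integral_neg] at h
  linarith

theorem stmt4 (a b μ σ : ℝ) (hσ : 0 < σ) :
    (∫ x : ℝ, (1 / (Real.sqrt (2 * Real.pi) * σ)) * Real.exp (-(x - μ) ^ 2 / (2 * σ ^ 2)) *
        erf (a * x + b)) =
      erf ((a * μ + b) / Real.sqrt (1 + 2 * a ^ 2 * σ ^ 2)) := by
  set g := fun x : ℝ => 1 / (√(2 * π) * σ) * exp (-(x - μ) ^ 2 / (2 * σ ^ 2)) with hg
  set K := 1 + 2 * a ^ 2 * σ ^ 2
  have h_lhs (c : ℝ) : HasDerivAt (fun c => ∫ x, g x * erf (a * x + c))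
      (2 / √π * (exp (-((a * μ + c) / √K) ^ 2) / √K)) c := by
    simpa only [hg, integral_gaussian_density_mul_exp_neg_sq a c μ hσ]
      using hasDerivAt_integral_mul_erf (integrable_gaussian_density μ hσ.ne') a c
  have h_rhs (c : ℝ) : HasDerivAt (fun c => erf ((a * μ + c) / √K))
      (2 / √π * (exp (-((a * μ + c) / √K) ^ 2) / √K)) c :=
    (HasDerivAt.erf (((hasDerivAt_id' c).const_add (a * μ)).div_const √K)).congr_deriv (by ring)
  have h_base : ∫ x, g x * erf (a * x + -(a * μ)) = erf ((a * μ + -(a * μ)) / √K) := by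
    simp_rw [add_neg_cancel, zero_div, erf_zero, ← sub_eq_add_neg, ← mul_sub]
    exact integral_mul_erf_eq_zero_of_symmetric (fun x => by simp only [hg]; ring_nf) a
  exact congrFun (eq_of_fderiv_eq (fun c => (h_lhs c).differentiableAt)
    (fun c => (h_rhs c).differentiableAt)
    (fun c => by rw [(h_lhs c).hasFDerivAt.fderiv, (h_rhs c).hasFDerivAt.fderiv]) _ h_base) b
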